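/- Under the assumptions of the previous statement (undamped singular permittivity, sin(σ₀(ω*)) ≠ 0), the function f is unbounded above and unbounded below on [ω* − δ, ω*) for every δ > 0; consequently, by continuity, f attains every real value infinitely often in any left neighbourhood of ω*. -/

import Mathlib

open Filter Topology Set

/-- The undamped contrast `ρ(ω) = √(1 + α/(ε₀(1 − βω²)))` (positive real square root). -/
noncomputable def undampedContrast (α β ε₀ : ℝ) (ω : ℝ) : ℝ :=
  Real.sqrt (1 + α / (ε₀ * (1 - β * ω ^ 2)))

/-- The right-hand side `f(ω)` of the one-dimensional dispersion relation
for the undamped singular permittivity. -/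
noncomputable def undampedF (α β ε₀ μ₀ : ℝ) (ω : ℝ) : ℝ :=
  let σ₀ := ω * Real.sqrt (ε₀ * μ₀)
  let ρ := undampedContrast α β ε₀ ω
  Real.cos σ₀ * Real.cos (ρ * σ₀) -
    ((1 + ρ ^ 2) / (2 * ρ)) * (Real.sin σ₀ * Real.sin (ρ * σ₀))

lemma aux_sqrt_atTop : Tendsto Real.sqrt atTop atTop := by
  refine tendsto_atTop_atTop.2 fun b => ⟨(max b 0) ^ 2, fun a ha => ?_⟩
  calc b ≤ max b 0 := le_max_left _ _
    _ = Real.sqrt ((max b 0) ^ 2) := (Real.sqrt_sq (le_max_right _ _)).symm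
    _ ≤ Real.sqrt a := Real.sqrt_le_sqrt ha

lemma aux_denom_pos {β : ℝ} (hβ : 0 < β) {ω : ℝ} (h0 : 0 < ω)
    (hW : ω < 1 / Real.sqrt β) : 0 < 1 - β * ω ^ 2 := by
  have hsβ : 0 < Real.sqrt β := Real.sqrt_pos.2 hβ
  have h1 : ω * Real.sqrt β < 1 := (lt_div_iff₀ hsβ).1 hW
  have h2 : Real.sqrt β ^ 2 = β := Real.sq_sqrt hβ.le
  nlinarith [mul_pos h0 hsβ]

lemma aux_rho_one_le {ε₀ α β : ℝ} (hε₀ : 0 < ε₀) (hα : 0 < α) (hβ : 0 < β)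
    {ω : ℝ} (h0 : 0 < ω) (hW : ω < 1 / Real.sqrt β) :
    1 ≤ undampedContrast α β ε₀ ω := by
  have h := aux_denom_pos hβ h0 hW
  have h1 : (1:ℝ) ≤ 1 + α / (ε₀ * (1 - β * ω ^ 2)) := by
    have : 0 < α / (ε₀ * (1 - β * ω ^ 2)) := div_pos hα (mul_pos hε₀ h)
    linarith
  calc (1:ℝ) = Real.sqrt 1 := Real.sqrt_one.symm
    _ ≤ _ := Real.sqrt_le_sqrt h1

lemma aux_rho_tendsto {ε₀ α β : ℝ} (hε₀ : 0 < ε₀) (hα : 0 < α) (hβ : 0 < β) :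
    Tendsto (undampedContrast α β ε₀) (𝓝[<] (1 / Real.sqrt β)) atTop := by
  set W := 1 / Real.sqrt β with hWdef
  have hsβ : 0 < Real.sqrt β := Real.sqrt_pos.2 hβ
  have hW : 0 < W := by positivity
  have hW2 : 1 - β * W ^ 2 = 0 := by
    have h2 : Real.sqrt β ^ 2 = β := Real.sq_sqrt hβ.le
    rw [hWdef, div_pow, h2, one_pow, mul_one_div_cancel hβ.ne', sub_self]
  have h1 : Tendsto (fun ω : ℝ => 1 - β * ω ^ 2) (𝓝[<] W) (𝓝[>] 0) := by
    apply tendsto_nhdsWithin_of_tendsto_nhds_of_eventually_within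
    · have hc : Continuous (fun ω : ℝ => 1 - β * ω ^ 2) := by continuity
      have := (hc.tendsto W).mono_left (nhdsWithin_le_nhds (s := Iio W))
      rwa [hW2] at this
    · filter_upwards [Ioo_mem_nhdsLT_of_mem (show W ∈ Ioc (0:ℝ) W from ⟨hW, le_refl W⟩)]
        with ω hω
      exact aux_denom_pos hβ hω.1 hω.2
  have h2 : Tendsto (fun x : ℝ => α / (ε₀ * x)) (𝓝[>] (0:ℝ)) atTop := by
    have h3 : Tendsto (fun x : ℝ => (α / ε₀) * x⁻¹) (𝓝[>] (0:ℝ)) atTop :=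
      tendsto_inv_nhdsGT_zero.const_mul_atTop (div_pos hα hε₀)
    refine h3.congr fun x => ?_
    rw [div_mul_eq_div_div]; ring
  have h4 : Tendsto (fun ω : ℝ => 1 + α / (ε₀ * (1 - β * ω ^ 2))) (𝓝[<] W) atTop :=
    tendsto_atTop_add_const_left _ 1 (h2.comp h1)
  exact aux_sqrt_atTop.comp h4

lemma aux_rho_contOn {ε₀ α β : ℝ} (hε₀ : 0 < ε₀) (hβ : 0 < β) :
    ContinuousOn (undampedContrast α β ε₀) (Ioo 0 (1 / Real.sqrt β)) := by
  apply Real.continuous_sqrt.comp_continuousOn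
  apply continuousOn_const.add
  apply continuousOn_const.div (by fun_prop)
  intro ω hω
  exact (mul_pos hε₀ (aux_denom_pos hβ hω.1 hω.2)).ne'

lemma aux_g_contOn {ε₀ α β μ₀ : ℝ} (hε₀ : 0 < ε₀) (hβ : 0 < β) :
    ContinuousOn (fun ω => undampedContrast α β ε₀ ω * (ω * Real.sqrt (ε₀ * μ₀)))
      (Ioo 0 (1 / Real.sqrt β)) :=
  (aux_rho_contOn hε₀ hβ).mul (by fun_prop)

lemma aux_F_contOn {ε₀ α β μ₀ : ℝ} (hε₀ : 0 < ε₀) (hα : 0 < α) (hβ : 0 < β) :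
    ContinuousOn (undampedF α β ε₀ μ₀) (Ioo 0 (1 / Real.sqrt β)) := by
  have hρ := aux_rho_contOn (α := α) hε₀ hβ
  have hg := aux_g_contOn (α := α) (μ₀ := μ₀) hε₀ hβ
  have hne : ∀ ω ∈ Ioo (0:ℝ) (1 / Real.sqrt β), 2 * undampedContrast α β ε₀ ω ≠ 0 :=
    fun ω hω => by
      have := aux_rho_one_le hε₀ hα hβ hω.1 hω.2; positivity
  exact ((Real.continuous_cos.comp_continuousOn (by fun_prop)).mul
      (Real.continuous_cos.comp_continuousOn hg)).sub
    (((continuousOn_const.add (hρ.pow 2)).div (continuousOn_const.mul hρ) hne).mul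
      ((Real.continuous_sin.comp_continuousOn (by fun_prop)).mul
        (Real.continuous_sin.comp_continuousOn hg)))

lemma aux_sin_lip (x y : ℝ) : |Real.sin x - Real.sin y| ≤ |x - y| := by
  rw [Real.sin_sub_sin, abs_mul, abs_mul]
  have h1 : |Real.sin ((x - y) / 2)| ≤ |(x - y) / 2| := Real.abs_sin_le_abs
  have h2 : |Real.cos ((x + y) / 2)| ≤ 1 := Real.abs_cos_le_one _
  calc |(2:ℝ)| * |Real.sin ((x - y) / 2)| * |Real.cos ((x + y) / 2)|
      ≤ |(2:ℝ)| * |(x - y) / 2| * 1 := by gcongr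
    _ = |x - y| := by rw [abs_div]; norm_num; ring

set_option maxHeartbeats 1000000 in
lemma aux_key {ε₀ α β μ₀ : ℝ} (hε₀ : 0 < ε₀) (hα : 0 < α) (hβ : 0 < β) (hμ₀ : 0 < μ₀)
    (hsin : Real.sin ((1 / Real.sqrt β) * Real.sqrt (ε₀ * μ₀)) ≠ 0)
    (e : ℝ) (he : e = 1 ∨ e = -1) :
    ∀ ε > (0:ℝ), ∀ M : ℝ, ∃ ω : ℝ,
      (1 / Real.sqrt β) - ε < ω ∧ (1 / Real.sqrt β) / 2 < ω ∧ ω < 1 / Real.sqrt β ∧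
      M < e * undampedF α β ε₀ μ₀ ω := by
  intro ε hε M
  set W := 1 / Real.sqrt β with hWdef
  set s := Real.sqrt (ε₀ * μ₀) with hsdef
  have hs : 0 < s := Real.sqrt_pos.2 (mul_pos hε₀ hμ₀)
  have hW : 0 < W := by rw [hWdef]; positivity
  set L := |Real.sin (W * s)| with hLdef
  have hL : 0 < L := abs_pos.2 hsin
  set sg : ℝ := if 0 < Real.sin (W * s) then 1 else -1 with hsgdef
  have hsg : sg = 1 ∨ sg = -1 := by unfold sg; split_ifs <;> simp
  have hsgL : sg * Real.sin (W * s) = L := by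
    unfold sg L
    split_ifs with h
    · rw [abs_of_pos h]; ring
    · have hlt : Real.sin (W * s) < 0 := lt_of_le_of_ne (not_lt.1 h) hsin
      rw [abs_of_neg hlt]; ring
  set η := L / (2 * s) with hηdef
  have hη : 0 < η := by positivity
  set R := 4 * (|M| + 1) / L with hRdef
  have hRpos : 0 < R := by positivity
  obtain ⟨l, hlW, hl⟩ := mem_nhdsLT_iff_exists_Ioo_subset.1
    ((aux_rho_tendsto hε₀ hα hβ).eventually_gt_atTop R)
  simp only [mem_Iio] at hlW
  set c : ℝ := max (max (W - ε) (W / 2)) (max l (W - η)) with hcdef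
  have hcW : c < W := by
    simp only [hcdef, max_lt_iff]
    exact ⟨⟨by linarith, by linarith⟩, hlW, by linarith⟩
  set c' : ℝ := (c + W) / 2 with hc'def
  have hcc' : c < c' := by rw [hc'def]; linarith
  have hc'W : c' < W := by rw [hc'def]; linarith
  have hc'1 : W / 2 ≤ c := ((le_max_right _ _).trans (le_max_left _ _))
  have h0c' : 0 < c' := lt_of_lt_of_le (by linarith) hcc'.le
  -- properties on [c', W)
  have hprop : ∀ ω : ℝ, c' ≤ ω → ω < W →
      0 < ω ∧ W - ε < ω ∧ W / 2 < ω ∧ R < undampedContrast α β ε₀ ω ∧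
      L / 2 ≤ sg * Real.sin (ω * s) := by
    intro ω hω1 hω2
    have hcω : c < ω := lt_of_lt_of_le hcc' hω1
    have hWε : W - ε < ω := (((le_max_left _ _).trans (le_max_left _ _))).trans_lt hcω
    have hW2 : W / 2 < ω := hc'1.trans_lt hcω
    have hlω : l < ω := (((le_max_left _ _).trans (le_max_right _ _))).trans_lt hcω
    have hηω : W - η < ω := (((le_max_right _ _).trans (le_max_right _ _))).trans_lt hcω
    have h0ω : 0 < ω := by linarith
    refine ⟨h0ω, hWε, hW2, hl ⟨hlω, hω2⟩, ?_⟩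
    have hdist : |Real.sin (ω * s) - Real.sin (W * s)| ≤ |ω * s - W * s| :=
      aux_sin_lip _ _
    have h6 : |ω * s - W * s| < L / 2 := by
      have hlt : (0:ℝ) < W * s - ω * s := by
        have := mul_lt_mul_of_pos_right hω2 hs; linarith
      rw [abs_sub_comm, abs_of_pos hlt]
      have h7 : W - ω < η := by linarith
      calc W * s - ω * s = (W - ω) * s := by ring
        _ < η * s := mul_lt_mul_of_pos_right h7 hs
        _ = L / 2 := by rw [hηdef]; field_simp
    have h8 := abs_le.1 (hdist.trans h6.le)
    rcases hsg with h | h <;> rw [h] at hsgL ⊢ <;> linarith [h8.1, h8.2]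
  -- target value t with sin t = e' and t ≥ g c'
  set g : ℝ → ℝ := fun ω => undampedContrast α β ε₀ ω * (ω * s) with hgdef
  set E := g c' with hEdef
  obtain ⟨n, hn⟩ := exists_nat_ge (E + 2)
  set e' : ℝ := -(e * sg) with he'def
  have he' : e' = 1 ∨ e' = -1 := by
    rcases he with h | h <;> rcases hsg with h2 | h2 <;> rw [he'def, h, h2] <;> norm_num
  set t : ℝ := e' * (Real.pi / 2) + (n : ℝ) * (2 * Real.pi) with htdef
  have htcast : t = e' * (Real.pi / 2) + ((n : ℤ) : ℝ) * (2 * Real.pi) := by push_cast; ring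
  have hsint : Real.sin t = e' := by
    rw [htcast, Real.sin_add_int_mul_two_pi]
    rcases he' with h | h <;> rw [h] <;> norm_num
  have hcost : Real.cos t = 0 := by
    rw [htcast, Real.cos_add_int_mul_two_pi]
    rcases he' with h | h <;> rw [h] <;> norm_num
  have hEt : E ≤ t := by
    have hπ3 := Real.pi_gt_three
    have hπ4 := Real.pi_le_four
    have hn0 : (0:ℝ) ≤ (n:ℝ) := Nat.cast_nonneg n
    have h1 : (n:ℝ) * 1 ≤ (n:ℝ) * (2 * Real.pi) :=
      mul_le_mul_of_nonneg_left (by linarith) hn0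
    have h2 : -(Real.pi / 2) ≤ e' * (Real.pi / 2) := by
      rcases he' with h | h <;> rw [h] <;> linarith
    rw [htdef]; linarith
  -- find ω'' with g ω'' > t, then IVT
  have hgt : Tendsto g (𝓝[<] W) atTop := by
    have hmul : Tendsto (fun ω : ℝ => ω * s) (𝓝[<] W) (𝓝 (W * s)) :=
      ((continuous_id.mul continuous_const).tendsto W).mono_left nhdsWithin_le_nhds
    have := hmul.pos_mul_atTop (by positivity : (0:ℝ) < W * s) (aux_rho_tendsto hε₀ hα hβ)
    simpa [hgdef, mul_comm] using this
  obtain ⟨ω'', hω''t, hω''mem⟩ := ((hgt.eventually_gt_atTop t).and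
    (Ioo_mem_nhdsLT_of_mem (show W ∈ Ioc c' W from ⟨hc'W, le_refl W⟩))).exists
  have hsub : Icc c' ω'' ⊆ Ioo 0 W := fun x hx =>
    ⟨lt_of_lt_of_le h0c' hx.1, lt_of_le_of_lt hx.2 hω''mem.2⟩
  obtain ⟨ω, hωmem, hgω⟩ := intermediate_value_Icc hω''mem.1.le
    ((aux_g_contOn (μ₀ := μ₀) hε₀ hβ).mono hsub) ⟨hEt, hω''t.le⟩
  have hωW : ω < W := lt_of_le_of_lt hωmem.2 hω''mem.2
  obtain ⟨h0ω, hWε, hW2ω, hρR, hsin2⟩ := hprop ω hωmem.1 hωW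
  refine ⟨ω, hWε, hW2ω, hωW, ?_⟩
  set ρω := undampedContrast α β ε₀ ω with hρωdef
  have hρ1 : 1 ≤ ρω := aux_rho_one_le hε₀ hα hβ h0ω hωW
  have hgω' : ρω * (ω * s) = t := hgω
  have hfeq : undampedF α β ε₀ μ₀ ω =
      Real.cos (ω * s) * Real.cos (ρω * (ω * s)) -
        ((1 + ρω ^ 2) / (2 * ρω)) * (Real.sin (ω * s) * Real.sin (ρω * (ω * s))) := rfl
  have hval : e * undampedF α β ε₀ μ₀ ω =
      ((1 + ρω ^ 2) / (2 * ρω)) * (sg * Real.sin (ω * s)) := by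
    rw [hfeq, hgω', hcost, hsint, he'def]
    rcases he with h | h <;> rcases hsg with h2 | h2 <;> rw [h, h2] <;> ring
  have hcoeff : ρω / 2 ≤ (1 + ρω ^ 2) / (2 * ρω) := by
    rw [div_le_div_iff₀ (by norm_num) (by positivity)]
    calc ρω * (2 * ρω) = 2 * ρω ^ 2 := by ring
      _ ≤ (1 + ρω ^ 2) * 2 := by linarith
  have hcoeffpos : (0:ℝ) < (1 + ρω ^ 2) / (2 * ρω) := by positivity
  have hRL : (R / 2) * (L / 2) = |M| + 1 := by
    rw [hRdef]; field_simp; ring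
  calc M ≤ |M| := le_abs_self M
    _ < (R / 2) * (L / 2) := by rw [hRL]; linarith
    _ ≤ (ρω / 2) * (L / 2) := by
        apply mul_le_mul_of_nonneg_right (by linarith) (by positivity)
    _ ≤ ((1 + ρω ^ 2) / (2 * ρω)) * (L / 2) :=
        mul_le_mul_of_nonneg_right hcoeff (by positivity)
    _ ≤ ((1 + ρω ^ 2) / (2 * ρω)) * (sg * Real.sin (ω * s)) :=
        mul_le_mul_of_nonneg_left hsin2 hcoeffpos.le
    _ = e * undampedF α β ε₀ μ₀ ω := hval.symm

lemma aux_infinite {S : Set ℝ} {W : ℝ} (hS : ∀ x ∈ S, x < W)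
    (h : ∀ ε > (0:ℝ), ∃ x ∈ S, W - ε < x) : S.Infinite := by
  intro hfin
  obtain ⟨x₀, hx₀, -⟩ := h 1 one_pos
  have hmem : sSup S ∈ S := Set.Nonempty.csSup_mem ⟨x₀, hx₀⟩ hfin
  obtain ⟨x, hxS, hx⟩ := h (W - sSup S) (sub_pos.2 (hS _ hmem))
  have := le_csSup hfin.bddAbove hxS
  linarith

theorem f_unbounded_and_attains_every_value_near_pole
    (ε₀ α β μ₀ : ℝ) (hε₀ : 0 < ε₀) (hα : 0 < α) (hβ : 0 < β) (hμ₀ : 0 < μ₀)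
    (hsin : Real.sin ((1 / Real.sqrt β) * Real.sqrt (ε₀ * μ₀)) ≠ 0) :
    ∀ δ > (0 : ℝ),
      (∀ M : ℝ, ∃ ω ∈ Ico ((1 / Real.sqrt β) - δ) (1 / Real.sqrt β),
        M < undampedF α β ε₀ μ₀ ω) ∧
      (∀ M : ℝ, ∃ ω ∈ Ico ((1 / Real.sqrt β) - δ) (1 / Real.sqrt β),
        undampedF α β ε₀ μ₀ ω < M) ∧
      (∀ y : ℝ,
        {ω ∈ Ico ((1 / Real.sqrt β) - δ) (1 / Real.sqrt β) |
          undampedF α β ε₀ μ₀ ω = y}.Infinite) := by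
  intro δ hδ
  have hW : 0 < 1 / Real.sqrt β := by positivity
  refine ⟨?_, ?_, ?_⟩
  · intro M
    obtain ⟨ω, h1, h2, h3, h4⟩ :=
      aux_key hε₀ hα hβ hμ₀ hsin 1 (Or.inl rfl) δ hδ M
    rw [one_mul] at h4
    exact ⟨ω, ⟨h1.le, h3⟩, h4⟩
  · intro M
    obtain ⟨ω, h1, h2, h3, h4⟩ :=
      aux_key hε₀ hα hβ hμ₀ hsin (-1) (Or.inr rfl) δ hδ (-M)
    exact ⟨ω, ⟨h1.le, h3⟩, by linarith⟩
  · intro y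
    apply aux_infinite (W := 1 / Real.sqrt β)
    · rintro x ⟨⟨-, hx⟩, -⟩
      exact hx
    · intro ε hε
      have hε' : 0 < min ε δ := lt_min hε hδ
      obtain ⟨ω₁, h11, h12, h13, h14⟩ :=
        aux_key hε₀ hα hβ hμ₀ hsin 1 (Or.inl rfl) (min ε δ) hε' y
      obtain ⟨ω₂, h21, h22, h23, h24⟩ :=
        aux_key hε₀ hα hβ hμ₀ hsin (-1) (Or.inr rfl) (min ε δ) hε' (-y)
      rw [one_mul] at h14
      have h24' : undampedF α β ε₀ μ₀ ω₂ < y := by linarith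
      have hsub : uIcc ω₁ ω₂ ⊆ Ioo 0 (1 / Real.sqrt β) := by
        intro x hx
        rw [Set.mem_uIcc] at hx
        rcases hx with ⟨ha, hb⟩ | ⟨ha, hb⟩ <;> constructor <;> linarith
      have hy : y ∈ uIcc (undampedF α β ε₀ μ₀ ω₁) (undampedF α β ε₀ μ₀ ω₂) := by
        rw [Set.mem_uIcc]
        exact Or.inr ⟨h24'.le, h14.le⟩
      obtain ⟨ω, hωu, hfω⟩ :=
        intermediate_value_uIcc ((aux_F_contOn hε₀ hα hβ).mono hsub) hy
      rw [Set.mem_uIcc] at hωu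
      have hεδ1 : min ε δ ≤ ε := min_le_left _ _
      have hεδ2 : min ε δ ≤ δ := min_le_right _ _
      refine ⟨ω, ⟨⟨?_, ?_⟩, hfω⟩, ?_⟩ <;>
        rcases hωu with ⟨ha, hb⟩ | ⟨ha, hb⟩ <;> linarith
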